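/- arXiv:1304.7954 — 2 statements merged into one kernel-verified Lean document; each statement's English description precedes it below -/
import Mathlib

section
/- All six eigenvalues of the matrix J(X₀), where X₀ = (0,0,0,0,0,0), are negative real numbers if and only if R₁ < 1, R₂ < 1 and R₃ < 1. Moreover, if Rᵢ > 1 for at least one i ∈ {1,2,3}, then J(X₀) has a positive real eigenvalue. -/
open Polynomial Matrix

/-- Jacobian matrix of the HBV three-strain vector field at `x = (y₁,y₂,y₃,v₁,v₂,v₃)`. -/
noncomputable def Jhbv (α₁ α₂ α₃ δ₁ δ₂ δ₃ c p₁ p₂ q₂ q₃ r₃ : ℝ) (x : Fin 6 → ℝ) :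
    Matrix (Fin 6) (Fin 6) ℝ :=
  !![-(α₁ * x 3 + δ₁), -(α₁ * x 3), -(α₁ * x 3), α₁ * (1 - x 0 - x 1 - x 2), 0, 0;
     -(α₂ * x 4), -(α₂ * x 4 + δ₂), -(α₂ * x 4), 0, α₂ * (1 - x 0 - x 1 - x 2), 0;
     -(α₃ * x 5), -(α₃ * x 5), -(α₃ * x 5 + δ₃), 0, 0, α₃ * (1 - x 0 - x 1 - x 2);
     p₁, 0, 0, -c, 0, 0;
     p₂, q₂, 0, 0, -c, 0;
     0, q₃, r₃, 0, 0, -c]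

/-! At `X₀` the Jacobian only couples a strain to itself and, through mutation (`p₂`, `q₃`), to
later strains, so grouping `(yₖ, vₖ)` by strain makes it block triangular with diagonal blocks
`[[-δ, α], [t, -c]]`. Such a block has negative trace and discriminant `(δ - c)² + 4αt ≥ 0`, so
two real eigenvalues, one always negative; their product `cδ - αt` shows that the other one is
negative iff `R < 1` and positive iff `R > 1`. -/

theorem Matrix.charpoly_eq_charpoly_fin_two {ι R : Type*} [Fintype ι] [DecidableEq ι]
    [CommRing R] (A : Matrix ι ι R) (hcard : Fintype.card ι = 2) {i j : ι} (hij : i ≠ j) :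
    A.charpoly = !![A i i, A i j; A j i, A j j].charpoly := by
  have hbij : Function.Bijective ![i, j] :=
    (Fintype.bijective_iff_injective_and_card _).2 ⟨injective_pair_iff_ne.2 hij, by simp [hcard]⟩
  rw [← charpoly_reindex (Equiv.ofBijective _ hbij).symm]
  congr
  ext a b
  fin_cases a <;> fin_cases b <;> rfl

theorem Matrix.exists_charpoly_eq_of_trace_neg {A : Matrix (Fin 2) (Fin 2) ℝ}
    (htr : A.trace < 0) (hdiscr : 0 ≤ A.discr) :
    ∃ r s : ℝ, A.charpoly = (X - C r) * (X - C s) ∧ s < 0 ∧ r * s = A.det := by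
  have hsq : √A.discr ^ 2 = A.trace ^ 2 - 4 * A.det := by
    rw [Real.sq_sqrt hdiscr, discr_fin_two]
  set r := (A.trace + √A.discr) / 2
  set s := (A.trace - √A.discr) / 2
  have hsum : A.trace = r + s := by ring
  have hprod : r * s = A.det := by linear_combination -hsq / 4
  have hs : s < 0 := by
    have := Real.sqrt_nonneg A.discr
    simp only [s]
    linarith
  refine ⟨r, s, ?_, hs, hprod⟩
  rw [charpoly_fin_two, ← hprod, hsum, C_add, C_mul]
  ring

/-- Strains are listed in reverse order because `Matrix.BlockTriangular` means block *upper*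
triangular, while mutation makes `J(X₀)` block lower triangular. -/
def strainIndex (i : Fin 6) : ℕᵒᵈ := OrderDual.toDual ((i : ℕ) % 3)

def strainBlock (α δ c t : ℝ) : Matrix (Fin 2) (Fin 2) ℝ := !![-δ, α; t, -c]

theorem blockTriangular_Jhbv_zero (α₁ α₂ α₃ δ₁ δ₂ δ₃ c p₁ p₂ q₂ q₃ r₃ : ℝ) :
    (Jhbv α₁ α₂ α₃ δ₁ δ₂ δ₃ c p₁ p₂ q₂ q₃ r₃ ![0, 0, 0, 0, 0, 0]).BlockTriangular strainIndex := by
  intro i j hij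
  rw [strainIndex, strainIndex, OrderDual.toDual_lt_toDual] at hij
  fin_cases i <;> fin_cases j <;> simp_all [Jhbv]

theorem charpoly_Jhbv_zero (α₁ α₂ α₃ δ₁ δ₂ δ₃ c p₁ p₂ q₂ q₃ r₃ : ℝ) :
    (Jhbv α₁ α₂ α₃ δ₁ δ₂ δ₃ c p₁ p₂ q₂ q₃ r₃ ![0, 0, 0, 0, 0, 0]).charpoly =
      (strainBlock α₁ δ₁ c p₁).charpoly * (strainBlock α₂ δ₂ c q₂).charpoly *
        (strainBlock α₃ δ₃ c r₃).charpoly := by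
  set M := Jhbv α₁ α₂ α₃ δ₁ δ₂ δ₃ c p₁ p₂ q₂ q₃ r₃ ![0, 0, 0, 0, 0, 0]
  have hblock (i j : Fin 6) (hij : i ≠ j) (h : strainIndex i = strainIndex j)
      (hcard : Fintype.card {x // strainIndex x = strainIndex i} = 2) :
      (M.toSquareBlock strainIndex (strainIndex i)).charpoly =
        !![M i i, M i j; M j i, M j j].charpoly :=
    charpoly_eq_charpoly_fin_two _ hcard (i := ⟨i, rfl⟩) (j := ⟨j, h.symm⟩)
      (by simpa using hij)
  have himage : Finset.univ.image strainIndex =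
      {strainIndex 0, strainIndex 1, strainIndex 2} := by
    decide
  rw [(blockTriangular_Jhbv_zero ..).charpoly, himage, Finset.prod_insert (by decide),
    Finset.prod_insert (by decide), Finset.prod_singleton,
    hblock 0 3 (by decide) rfl (by decide), hblock 1 4 (by decide) rfl (by decide),
    hblock 2 5 (by decide) rfl (by decide), mul_assoc]
  simp [M, Jhbv, strainBlock]

theorem exists_charpoly_strainBlock_eq {α δ c t : ℝ} (hα : 0 ≤ α) (hδ : 0 < δ) (hc : 0 < c)
    (ht : 0 ≤ t) :
    ∃ r s : ℝ, (strainBlock α δ c t).charpoly = (X - C r) * (X - C s) ∧ s < 0 ∧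
      (r < 0 ↔ α * t / (c * δ) < 1) ∧ (0 < r ↔ 1 < α * t / (c * δ)) := by
  have htr : (strainBlock α δ c t).trace < 0 := by
    rw [strainBlock, trace_fin_two_of]
    linarith
  have hdiscr : 0 ≤ (strainBlock α δ c t).discr := by
    rw [strainBlock, discr_fin_two, trace_fin_two_of, det_fin_two_of]
    nlinarith [sq_nonneg (δ - c), mul_nonneg hα ht]
  obtain ⟨r, s, hchar, hs, hrs⟩ := exists_charpoly_eq_of_trace_neg htr hdiscr
  rw [strainBlock, det_fin_two_of] at hrs
  have hcδ : 0 < c * δ := mul_pos hc hδ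
  refine ⟨r, s, hchar, hs, ?_, ?_⟩
  · rw [div_lt_one hcδ]
    constructor <;> intro h <;> nlinarith
  · rw [one_lt_div hcδ]
    constructor <;> intro h <;> nlinarith

theorem Polynomial.roots_map_ofReal_prod_X_sub_C (s : Multiset ℝ) :
    (((s.map fun a => X - C a).prod).map (algebraMap ℝ ℂ)).roots = s.map (↑) := by
  rw [Polynomial.map_multiset_prod, Multiset.map_map]
  simpa [Function.comp_def] using roots_multiset_prod_X_sub_C (s.map ((↑) : ℝ → ℂ))

theorem stmt_2_general (α₁ α₂ α₃ δ₁ δ₂ δ₃ c p₁ p₂ q₂ q₃ r₃ : ℝ)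
    (hα₁ : 0 < α₁) (hα₂ : 0 < α₂) (hα₃ : 0 < α₃)
    (hδ₁ : 0 < δ₁) (hδ₂ : 0 < δ₂) (hδ₃ : 0 < δ₃) (hc : 0 < c)
    (hp₁ : 0 < p₁) (hq₂ : 0 < q₂) (hr₃ : 0 < r₃) :
    let R₁ : ℝ := α₁ * p₁ / (c * δ₁)
    let R₂ : ℝ := α₂ * q₂ / (c * δ₂)
    let R₃ : ℝ := α₃ * r₃ / (c * δ₃)
    let M := Jhbv α₁ α₂ α₃ δ₁ δ₂ δ₃ c p₁ p₂ q₂ q₃ r₃ ![0, 0, 0, 0, 0, 0]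
    ((∀ μ ∈ (M.charpoly.map (algebraMap ℝ ℂ)).roots, μ.re < 0 ∧ μ.im = 0) ↔
        R₁ < 1 ∧ R₂ < 1 ∧ R₃ < 1) ∧
      ((1 < R₁ ∨ 1 < R₂ ∨ 1 < R₃) → ∃ μ : ℝ, M.charpoly.IsRoot μ ∧ 0 < μ) := by
  intro R₁ R₂ R₃ M
  obtain ⟨r₁, s₁, h₁, hs₁, hr₁_neg, hr₁_pos⟩ :=
    exists_charpoly_strainBlock_eq hα₁.le hδ₁ hc hp₁.le
  obtain ⟨r₂, s₂, h₂, hs₂, hr₂_neg, hr₂_pos⟩ :=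
    exists_charpoly_strainBlock_eq hα₂.le hδ₂ hc hq₂.le
  obtain ⟨r₃, s₃, h₃, hs₃, hr₃_neg, hr₃_pos⟩ :=
    exists_charpoly_strainBlock_eq hα₃.le hδ₃ hc hr₃.le
  have hM :
      M.charpoly = (({r₁, s₁, r₂, s₂, r₃, s₃} : Multiset ℝ).map fun a => X - C a).prod := by
    simp only [M, charpoly_Jhbv_zero, h₁, h₂, h₃]
    simp only [Multiset.insert_eq_cons, Multiset.map_cons, Multiset.map_singleton,
      Multiset.prod_cons, Multiset.prod_singleton]
    ring
  rw [hM, roots_map_ofReal_prod_X_sub_C]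
  refine ⟨?_, ?_⟩
  · simp [hs₁, hs₂, hs₃, hr₁_neg, hr₂_neg, hr₃_neg, R₁, R₂, R₃]
  · rintro (h | h | h)
    · exact ⟨r₁, by simp, hr₁_pos.2 h⟩
    · exact ⟨r₂, by simp, hr₂_pos.2 h⟩
    · exact ⟨r₃, by simp, hr₃_pos.2 h⟩

/-- all six eigenvalues of J(X₀) are negative real numbers iff R₁ < 1,
R₂ < 1 and R₃ < 1; moreover if some Rᵢ > 1 then J(X₀) has a positive real eigenvalue. -/
theorem stmt_2 (α₁ α₂ α₃ δ₁ δ₂ δ₃ c p₁ p₂ q₂ q₃ r₃ : ℝ)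
    (hα₁ : 0 < α₁) (hα₂ : 0 < α₂) (hα₃ : 0 < α₃)
    (hδ₁ : 0 < δ₁) (hδ₂ : 0 < δ₂) (hδ₃ : 0 < δ₃) (hc : 0 < c)
    (hp₁ : 0 < p₁) (hp₂ : 0 < p₂) (hq₂ : 0 < q₂) (hq₃ : 0 < q₃) (hr₃ : 0 < r₃) :
    let R₁ : ℝ := α₁ * p₁ / (c * δ₁)
    let R₂ : ℝ := α₂ * q₂ / (c * δ₂)
    let R₃ : ℝ := α₃ * r₃ / (c * δ₃)
    let M := Jhbv α₁ α₂ α₃ δ₁ δ₂ δ₃ c p₁ p₂ q₂ q₃ r₃ ![0, 0, 0, 0, 0, 0]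
    ((∀ μ ∈ (M.charpoly.map (algebraMap ℝ ℂ)).roots, μ.re < 0 ∧ μ.im = 0) ↔
        R₁ < 1 ∧ R₂ < 1 ∧ R₃ < 1) ∧
      ((1 < R₁ ∨ 1 < R₂ ∨ 1 < R₃) → ∃ μ : ℝ, M.charpoly.IsRoot μ ∧ 0 < μ) :=
  stmt_2_general α₁ α₂ α₃ δ₁ δ₂ δ₃ c p₁ p₂ q₂ q₃ r₃ hα₁ hα₂ hα₃ hδ₁ hδ₂ hδ₃ hc hp₁ hq₂ hr₃
end

section
/- Assume R₃ > 1 and let X₃ = (0, 0, 1 − 1/R₃, 0, 0, (R₃−1)δ₃/α₃). Then all six eigenvalues of J(X₃) are negative real numbers if and only if R₃ > R₁ and R₃ > R₂. Moreover, if R₁ > R₃ or R₂ > R₃, then J(X₃) has a positive real eigenvalue. -/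
/-!
At `X₃` the Jacobian is block lower triangular for the strain pairs `(yᵢ, vᵢ)`, so its
characteristic polynomial is the product of those of three `2 × 2` blocks
`[[-dᵢ, αᵢ / R₃], [sᵢ, -c]]`, with `(d₁, s₁) = (δ₁, p₁)`, `(d₂, s₂) = (δ₂, q₂)` and
`(d₃, s₃) = (R₃ δ₃, r₃)`. Such a block has negative trace and a positive off-diagonal product,
hence two real eigenvalues of negative sum, and these are both negative iff the determinant
`c dᵢ - αᵢ sᵢ / R₃` is positive, while a negative determinant gives a positive eigenvalue.
For `i = 1, 2` the sign of the determinant is that of `R₃ - Rᵢ`; for `i = 3` it is that of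
`R₃ - 1`, which is positive.
-/

open Polynomial Matrix

def AllRootsNegReal (p : ℝ[X]) : Prop :=
  ∀ μ ∈ (p.map (algebraMap ℝ ℂ)).roots, μ.re < 0 ∧ μ.im = 0

theorem allRootsNegReal_mul {p q : ℝ[X]} (hpq : p * q ≠ 0) :
    AllRootsNegReal (p * q) ↔ AllRootsNegReal p ∧ AllRootsNegReal q := by
  have hpq' : p.map (algebraMap ℝ ℂ) * q.map (algebraMap ℝ ℂ) ≠ 0 := by
    rw [← Polynomial.map_mul]
    exact (Polynomial.map_ne_zero_iff (algebraMap ℝ ℂ).injective).2 hpq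
  simp only [AllRootsNegReal, Polynomial.map_mul, roots_mul hpq', Multiset.mem_add]
  exact ⟨fun h => ⟨fun μ hμ => h μ (.inl hμ), fun μ hμ => h μ (.inr hμ)⟩,
    fun h μ => Or.rec (h.1 μ) (h.2 μ)⟩

theorem allRootsNegReal_X_sub_C_mul_X_sub_C (u v : ℝ) :
    AllRootsNegReal ((X - C u) * (X - C v)) ↔ u < 0 ∧ v < 0 := by
  rw [allRootsNegReal_mul (mul_ne_zero (X_sub_C_ne_zero u) (X_sub_C_ne_zero v))]
  simp [AllRootsNegReal]

theorem exists_X_sq_sub_C_mul_X_add_C_eq {t d : ℝ} (h : 4 * d ≤ t ^ 2) :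
    ∃ u v : ℝ, X ^ 2 - C t * X + C d = (X - C u) * (X - C v) ∧ u + v = t ∧ u * v = d := by
  set s := √(t ^ 2 - 4 * d)
  have hs : s ^ 2 = t ^ 2 - 4 * d := Real.sq_sqrt (by linarith)
  have hsum : (t + s) / 2 + (t - s) / 2 = t := by ring
  have hprod : (t + s) / 2 * ((t - s) / 2) = d := by linear_combination -hs / 4
  refine ⟨(t + s) / 2, (t - s) / 2, ?_, hsum, hprod⟩
  conv_lhs => rw [← hsum, ← hprod]
  simp only [map_add, map_mul]
  ring

theorem Matrix.charpoly_fin_two_eq_mul {A : Matrix (Fin 2) (Fin 2) ℝ}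
    (h : 4 * A.det ≤ A.trace ^ 2) :
    ∃ u v : ℝ, A.charpoly = (X - C u) * (X - C v) ∧ u + v = A.trace ∧ u * v = A.det := by
  rw [charpoly_fin_two]
  exact exists_X_sq_sub_C_mul_X_add_C_eq h

theorem Matrix.allRootsNegReal_charpoly_fin_two_iff {A : Matrix (Fin 2) (Fin 2) ℝ}
    (htr : A.trace < 0) (hdisc : 4 * A.det ≤ A.trace ^ 2) :
    AllRootsNegReal A.charpoly ↔ 0 < A.det := by
  obtain ⟨u, v, hA, hsum, hprod⟩ := A.charpoly_fin_two_eq_mul hdisc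
  rw [hA, allRootsNegReal_X_sub_C_mul_X_sub_C, ← hprod, mul_pos_iff, or_iff_right]
  rintro ⟨hu, hv⟩
  linarith

theorem Matrix.exists_pos_isRoot_charpoly_of_det_neg {A : Matrix (Fin 2) (Fin 2) ℝ}
    (hdet : A.det < 0) : ∃ μ : ℝ, A.charpoly.IsRoot μ ∧ 0 < μ := by
  obtain ⟨u, v, hA, -, hprod⟩ := A.charpoly_fin_two_eq_mul (by nlinarith [sq_nonneg A.trace])
  rw [← hprod, mul_neg_iff] at hdet
  rcases hdet with ⟨hu, -⟩ | ⟨-, hv⟩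
  · exact ⟨u, by simp [hA], hu⟩
  · exact ⟨v, by simp [hA], hv⟩

theorem allRootsNegReal_charpoly_of_neg_diag_iff {δ γ b c : ℝ} (hδ : 0 < δ) (hγ : 0 < γ)
    (hbc : 0 ≤ b * c) : AllRootsNegReal (!![-δ, b; c, -γ]).charpoly ↔ b * c < δ * γ := by
  rw [allRootsNegReal_charpoly_fin_two_iff] <;>
    simp only [trace_fin_two_of, det_fin_two_of]
  · rw [neg_mul_neg, sub_pos]
  · linarith
  · nlinarith [sq_nonneg (δ - γ)]

noncomputable def finTwoEquivFiber {n α : Type*} {b : n → α} {a : α} {i j : n} (hij : i ≠ j)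
    (hb : ∀ k, b k = a ↔ k = i ∨ k = j) : Fin 2 ≃ {k // b k = a} :=
  Equiv.ofBijective ![⟨i, (hb i).2 (Or.inl rfl)⟩, ⟨j, (hb j).2 (Or.inr rfl)⟩] <| by
    constructor
    · intro x y hxy
      fin_cases x <;> fin_cases y <;> simp_all [Subtype.ext_iff, eq_comm]
    · rintro ⟨k, hk⟩
      rcases (hb k).1 hk with rfl | rfl
      · exact ⟨0, rfl⟩
      · exact ⟨1, rfl⟩

theorem Matrix.charpoly_toSquareBlock_of_pair {n α R : Type*} [Fintype n] [DecidableEq n]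
    [DecidableEq α] [CommRing R] (M : Matrix n n R) {b : n → α} {a : α} {i j : n}
    (hij : i ≠ j) (hb : ∀ k, b k = a ↔ k = i ∨ k = j) :
    (M.toSquareBlock b a).charpoly = (!![M i i, M i j; M j i, M j j]).charpoly := by
  rw [← charpoly_reindex (finTwoEquivFiber hij hb).symm]
  congr 1
  ext x y
  fin_cases x <;> fin_cases y <;> rfl

theorem charpoly_strainBlockTriangular {R : Type*} [CommRing R]
    (a₁ b₁ c₁ d₁ a₂ b₂ c₂ d₂ a₃ b₃ c₃ d₃ e f g h : R) :
    (!![a₁, 0, 0, b₁, 0, 0;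
        0, a₂, 0, 0, b₂, 0;
        e, f, a₃, 0, 0, b₃;
        c₁, 0, 0, d₁, 0, 0;
        g, c₂, 0, 0, d₂, 0;
        0, h, c₃, 0, 0, d₃] : Matrix (Fin 6) (Fin 6) R).charpoly =
      (!![a₁, b₁; c₁, d₁]).charpoly * (!![a₂, b₂; c₂, d₂]).charpoly *
        (!![a₃, b₃; c₃, d₃]).charpoly := by
  -- `BlockTriangular` is upper block triangular, so the pairs (0, 3), (1, 4), (2, 5) get
  -- decreasing ranks.
  set b : Fin 6 → ℕ := ![2, 1, 0, 2, 1, 0]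
  have himage : Finset.univ.image b = {2, 1, 0} := by decide
  refine (BlockTriangular.charpoly _ (b := b) ?_).trans ?_
  · intro i j hij
    fin_cases i <;> fin_cases j <;> simp_all [b]
  rw [himage, Finset.prod_insert (by decide), Finset.prod_insert (by decide),
    Finset.prod_singleton, ← mul_assoc,
    charpoly_toSquareBlock_of_pair _ (i := 0) (j := 3) (by decide) (by decide),
    charpoly_toSquareBlock_of_pair _ (i := 1) (j := 4) (by decide) (by decide),
    charpoly_toSquareBlock_of_pair _ (i := 2) (j := 5) (by decide) (by decide)]
  rfl

theorem Jhbv_strainThreeEquilibrium {α₁ α₂ α₃ δ₁ δ₂ δ₃ c p₁ p₂ q₂ q₃ r₃ R : ℝ}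
    (hα₃ : α₃ ≠ 0) :
    Jhbv α₁ α₂ α₃ δ₁ δ₂ δ₃ c p₁ p₂ q₂ q₃ r₃ ![0, 0, 1 - 1 / R, 0, 0, (R - 1) * δ₃ / α₃] =
      !![-δ₁, 0, 0, α₁ / R, 0, 0;
         0, -δ₂, 0, 0, α₂ / R, 0;
         -((R - 1) * δ₃), -((R - 1) * δ₃), -(R * δ₃), 0, 0, α₃ / R;
         p₁, 0, 0, -c, 0, 0;
         p₂, q₂, 0, 0, -c, 0;
         0, q₃, r₃, 0, 0, -c] := by
  have hv : α₃ * ((R - 1) * δ₃ / α₃) = (R - 1) * δ₃ := mul_div_cancel₀ _ hα₃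
  ext i j
  fin_cases i <;> fin_cases j <;> simp [Jhbv, hv, ← div_eq_mul_inv]
  ring

theorem allRootsNegReal_charpoly_strainBlock_iff {α δ c p R : ℝ} (hα : 0 < α) (hδ : 0 < δ)
    (hc : 0 < c) (hp : 0 < p) (hR : 0 < R) :
    AllRootsNegReal (!![-δ, α / R; p, -c]).charpoly ↔ α * p / (c * δ) < R := by
  rw [allRootsNegReal_charpoly_of_neg_diag_iff hδ hc (by positivity), div_mul_eq_mul_div,
    mul_comm δ, div_lt_comm₀ hR (by positivity)]

theorem exists_pos_isRoot_charpoly_strainBlock {α δ c p R : ℝ} (hδ : 0 < δ) (hc : 0 < c)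
    (hR : 0 < R) (h : R < α * p / (c * δ)) :
    ∃ μ : ℝ, (!![-δ, α / R; p, -c]).charpoly.IsRoot μ ∧ 0 < μ := by
  refine exists_pos_isRoot_charpoly_of_det_neg ?_
  rw [lt_div_comm₀ hR (by positivity), ← div_mul_eq_mul_div] at h
  simp only [det_fin_two_of]
  linarith

theorem stmt_5_general (α₁ α₂ α₃ δ₁ δ₂ δ₃ c p₁ p₂ q₂ q₃ r₃ : ℝ)
    (hα₁ : 0 < α₁) (hα₂ : 0 < α₂) (hα₃ : 0 < α₃)
    (hδ₁ : 0 < δ₁) (hδ₂ : 0 < δ₂) (hδ₃ : 0 < δ₃) (hc : 0 < c)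
    (hp₁ : 0 < p₁) (hq₂ : 0 < q₂) (hr₃ : 0 < r₃)
    (hR₃ : 1 < α₃ * r₃ / (c * δ₃)) :
    let R₁ : ℝ := α₁ * p₁ / (c * δ₁)
    let R₂ : ℝ := α₂ * q₂ / (c * δ₂)
    let R₃ : ℝ := α₃ * r₃ / (c * δ₃)
    let M := Jhbv α₁ α₂ α₃ δ₁ δ₂ δ₃ c p₁ p₂ q₂ q₃ r₃
      ![0, 0, 1 - 1 / R₃, 0, 0, (R₃ - 1) * δ₃ / α₃]
    ((∀ μ ∈ (M.charpoly.map (algebraMap ℝ ℂ)).roots, μ.re < 0 ∧ μ.im = 0) ↔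
        R₁ < R₃ ∧ R₂ < R₃) ∧
      ((R₃ < R₁ ∨ R₃ < R₂) → ∃ μ : ℝ, M.charpoly.IsRoot μ ∧ 0 < μ) := by
  intro R₁ R₂ R₃ M
  have hR₃pos : 0 < R₃ := one_pos.trans hR₃
  set B₁ : Matrix (Fin 2) (Fin 2) ℝ := !![-δ₁, α₁ / R₃; p₁, -c]
  set B₂ : Matrix (Fin 2) (Fin 2) ℝ := !![-δ₂, α₂ / R₃; q₂, -c]
  set B₃ : Matrix (Fin 2) (Fin 2) ℝ := !![-(R₃ * δ₃), α₃ / R₃; r₃, -c]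
  have hM : M.charpoly = B₁.charpoly * B₂.charpoly * B₃.charpoly := by
    rw [← charpoly_strainBlockTriangular]
    exact congrArg charpoly (Jhbv_strainThreeEquilibrium hα₃.ne')
  have hM₀ : B₁.charpoly * B₂.charpoly * B₃.charpoly ≠ 0 := hM ▸ M.charpoly_monic.ne_zero
  have h₃ : α₃ * r₃ / (c * (R₃ * δ₃)) < R₃ := by
    rw [mul_left_comm, div_mul_eq_div_div_swap]
    show R₃ / R₃ < R₃
    rwa [div_self hR₃pos.ne']
  refine ⟨?_, ?_⟩
  · change AllRootsNegReal M.charpoly ↔ _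
    rw [hM, allRootsNegReal_mul hM₀, allRootsNegReal_mul (left_ne_zero_of_mul hM₀),
      allRootsNegReal_charpoly_strainBlock_iff hα₁ hδ₁ hc hp₁ hR₃pos,
      allRootsNegReal_charpoly_strainBlock_iff hα₂ hδ₂ hc hq₂ hR₃pos,
      allRootsNegReal_charpoly_strainBlock_iff hα₃ (by positivity) hc hr₃ hR₃pos]
    exact and_iff_left h₃
  · rintro (h | h)
    · obtain ⟨μ, hμ, hμpos⟩ := exists_pos_isRoot_charpoly_strainBlock hδ₁ hc hR₃pos h
      exact ⟨μ, hM ▸ root_mul_right_of_isRoot _ (root_mul_right_of_isRoot _ hμ), hμpos⟩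
    · obtain ⟨μ, hμ, hμpos⟩ := exists_pos_isRoot_charpoly_strainBlock hδ₂ hc hR₃pos h
      exact ⟨μ, hM ▸ root_mul_right_of_isRoot _ (root_mul_left_of_isRoot _ hμ), hμpos⟩

/-- assuming R₃ > 1, all six eigenvalues of J(X₃) are negative real numbers
iff R₃ > R₁ and R₃ > R₂; moreover if R₁ > R₃ or R₂ > R₃ then J(X₃) has a positive real
eigenvalue. -/
theorem stmt_5 (α₁ α₂ α₃ δ₁ δ₂ δ₃ c p₁ p₂ q₂ q₃ r₃ : ℝ)
    (hα₁ : 0 < α₁) (hα₂ : 0 < α₂) (hα₃ : 0 < α₃)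
    (hδ₁ : 0 < δ₁) (hδ₂ : 0 < δ₂) (hδ₃ : 0 < δ₃) (hc : 0 < c)
    (hp₁ : 0 < p₁) (hp₂ : 0 < p₂) (hq₂ : 0 < q₂) (hq₃ : 0 < q₃) (hr₃ : 0 < r₃)
    (hR₃ : 1 < α₃ * r₃ / (c * δ₃)) :
    let R₁ : ℝ := α₁ * p₁ / (c * δ₁)
    let R₂ : ℝ := α₂ * q₂ / (c * δ₂)
    let R₃ : ℝ := α₃ * r₃ / (c * δ₃)
    let M := Jhbv α₁ α₂ α₃ δ₁ δ₂ δ₃ c p₁ p₂ q₂ q₃ r₃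
      ![0, 0, 1 - 1 / R₃, 0, 0, (R₃ - 1) * δ₃ / α₃]
    ((∀ μ ∈ (M.charpoly.map (algebraMap ℝ ℂ)).roots, μ.re < 0 ∧ μ.im = 0) ↔
        R₁ < R₃ ∧ R₂ < R₃) ∧
      ((R₃ < R₁ ∨ R₃ < R₂) → ∃ μ : ℝ, M.charpoly.IsRoot μ ∧ 0 < μ) :=
  stmt_5_general α₁ α₂ α₃ δ₁ δ₂ δ₃ c p₁ p₂ q₂ q₃ r₃ hα₁ hα₂ hα₃ hδ₁ hδ₂ hδ₃ hc hp₁ hq₂ hr₃ hR₃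
end
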